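/- arXiv:1607.07584 — 2 statements merged into one kernel-verified Lean document; each statement's English description precedes it below -/
import Mathlib

section
/- Assume λ_k < α ≤ β. Then for every v ∈ V₂ with v ≠ 0, the function w = M_{α,β}(v) + v is sign-changing: both w⁺ and w⁻ are nonzero in L²(Ω), i.e. the sets {w > 0} and {w < 0} have positive Lebesgue measure in Ω. -/
open MeasureTheory RealInnerProductSpace Filter Topology

/-- The functional `J_{α,β}(u) = ½(B(u,u) - α∫_Ω (u⁺)² - β∫_Ω (u⁻)²)`, where the Hilbert
space `X₀` carries the Gagliardo-type inner product `B = ⟪·,·⟫` and `T : X₀ → L²(Ω)` is the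
embedding into `L²(Ω)`; note `∫_Ω (u⁺)² = ‖(Tu)⁺‖²_{L²}`. -/
noncomputable def Jfun {Ω : Type*} [MeasurableSpace Ω] {μ : Measure Ω}
    {X₀ : Type*} [NormedAddCommGroup X₀] [InnerProductSpace ℝ X₀]
    (T : X₀ →ₗ[ℝ] Lp ℝ 2 μ) (α β : ℝ) (u : X₀) : ℝ :=
  (⟪u, u⟫ - α * ‖Lp.posPart (T u)‖ ^ 2 - β * ‖Lp.negPart (T u)‖ ^ 2) / 2

/-!
Write `w = M(v) + v`. Maximality of `M(v)` makes `t ↦ J(w + t φ₁)` maximal at `t = 0`. Along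
the eigendirection `φ₁` every quadratic form `B(u,u) - γ ‖u‖²_{L²}` changes by
`(λ₁ - γ)(2t ⟨φ₁, w⟩ + t² ‖φ₁‖²)`. If `w ≤ 0`, then `J` lies above this form for `γ = β`, with
equality at `w`, so small `t > 0` force `⟨φ₁, w⟩ ≥ 0`. If `w ≥ 0`, take `γ = α` and `t < 0`: the
negative part of `w + t φ₁` is bounded by `|t| φ₁`, giving `⟨φ₁, w⟩ ≤ 0`. As `φ₁ > 0`, both
cases force `w = 0`, which is impossible since `V₁ ∩ V₂ = 0`.
-/

theorem nonpos_of_forall_pos_mul_le_sq_mul {a b : ℝ} (h : ∀ ε > 0, ε * a ≤ ε ^ 2 * b) :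
    a ≤ 0 := by
  refine le_of_forall_pos_le_add fun δ hδ => ?_
  set ε := δ / (|b| + 1)
  have hε : 0 < ε := by positivity
  have hεb : ε * |b| ≤ δ := by
    rw [div_mul_eq_mul_div, div_le_iff₀ (by positivity)]
    nlinarith [abs_nonneg b]
  have hab : a ≤ ε * b := le_of_mul_le_mul_left (by nlinarith [h ε hε]) hε
  calc a ≤ ε * b := hab
    _ ≤ ε * |b| := mul_le_mul_of_nonneg_left (le_abs_self b) hε.le
    _ ≤ 0 + δ := by linarith

namespace MeasureTheory.Lp

variable {Y : Type*} [MeasurableSpace Y] {μ : Measure Y}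

theorem inner_eq_integral_mul (f g : Lp ℝ 2 μ) : ⟪f, g⟫ = ∫ x, f x * g x ∂μ := by
  simp only [L2.inner_def, Real.inner_apply]

theorem integrable_mul (f g : Lp ℝ 2 μ) : Integrable (fun x => f x * g x) μ := by
  simpa only [Real.inner_apply] using L2.integrable_inner (𝕜 := ℝ) f g

theorem norm_sq_eq_integral_mul_self (f : Lp ℝ 2 μ) : ‖f‖ ^ 2 = ∫ x, f x * f x ∂μ := by
  rw [← real_inner_self_eq_norm_sq, inner_eq_integral_mul]

theorem norm_posPart_sq_add_norm_negPart_sq (f : Lp ℝ 2 μ) :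
    ‖posPart f‖ ^ 2 + ‖negPart f‖ ^ 2 = ‖f‖ ^ 2 := by
  rw [norm_sq_eq_integral_mul_self, norm_sq_eq_integral_mul_self, norm_sq_eq_integral_mul_self,
    ← integral_add (integrable_mul _ _) (integrable_mul _ _)]
  refine integral_congr_ae ?_
  filter_upwards [coeFn_posPart f, coeFn_negPart f] with x hpos hneg
  rw [hpos, hneg]
  rcases le_total (f x) 0 with h | h
  · rw [max_eq_right h, min_eq_left h]; ring
  · rw [max_eq_left h, min_eq_right h]; ring

variable {p : ENNReal}

theorem posPart_eq_zero_of_ae_nonpos {f : Lp ℝ p μ} (hf : ∀ᵐ x ∂μ, f x ≤ 0) : posPart f = 0 := by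
  apply Lp.ext
  filter_upwards [coeFn_posPart f, coeFn_zero ℝ p μ, hf] with x hpos hzero hx
  rw [hpos, hzero, max_eq_right hx, Pi.zero_apply]

theorem negPart_eq_zero_of_ae_nonneg {f : Lp ℝ p μ} (hf : ∀ᵐ x ∂μ, 0 ≤ f x) : negPart f = 0 :=
  posPart_eq_zero_of_ae_nonpos <| by
    filter_upwards [coeFn_neg f, hf] with x hneg hx
    rw [hneg, Pi.neg_apply, neg_nonpos]
    exact hx

theorem norm_negPart_le_of_ae_neg_le {f g : Lp ℝ p μ} (h : ∀ᵐ x ∂μ, -g x ≤ f x) :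
    ‖negPart f‖ ≤ ‖g‖ :=
  norm_le_norm_of_ae_le <| by
    filter_upwards [coeFn_negPart_eq_max f, h] with x hneg hx
    rw [hneg, Real.norm_of_nonneg (le_max_right _ _), Real.norm_eq_abs]
    exact max_le (by linarith [le_abs_self (g x)]) (abs_nonneg _)

theorem inner_pos_of_ae_pos_of_ae_nonneg {φ f : Lp ℝ 2 μ} (hφ : ∀ᵐ x ∂μ, 0 < φ x)
    (hf : ∀ᵐ x ∂μ, 0 ≤ f x) (hf0 : f ≠ 0) : 0 < ⟪φ, f⟫ := by
  have hprod : 0 ≤ᵐ[μ] fun x => φ x * f x := by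
    filter_upwards [hφ, hf] with x hφx hfx
    exact mul_nonneg hφx.le hfx
  rw [inner_eq_integral_mul]
  refine (integral_nonneg_of_ae hprod).lt_of_ne fun h => hf0 ?_
  have hzero := (integral_eq_zero_iff_of_nonneg_ae hprod (integrable_mul φ f)).1 h.symm
  apply Lp.ext
  filter_upwards [hzero, hφ, coeFn_zero ℝ 2 μ] with x hx hφx hzx
  rw [hzx]
  exact (mul_eq_zero.1 hx).resolve_left hφx.ne'

end MeasureTheory.Lp

section Perturbation

variable {Y : Type*} [MeasurableSpace Y] {μ : Measure Y}
  {X : Type*} [NormedAddCommGroup X] [InnerProductSpace ℝ X] (T : X →ₗ[ℝ] Lp ℝ 2 μ)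

theorem two_mul_Jfun_eq_sub_negPart (α β : ℝ) (u : X) :
    2 * Jfun T α β u = ⟪u, u⟫ - α * ‖T u‖ ^ 2 - (β - α) * ‖Lp.negPart (T u)‖ ^ 2 := by
  rw [Jfun]
  linear_combination (-α) * Lp.norm_posPart_sq_add_norm_negPart_sq (T u)

theorem two_mul_Jfun_eq_add_posPart (α β : ℝ) (u : X) :
    2 * Jfun T α β u = ⟪u, u⟫ - β * ‖T u‖ ^ 2 + (β - α) * ‖Lp.posPart (T u)‖ ^ 2 := by
  rw [Jfun]
  linear_combination (-β) * Lp.norm_posPart_sq_add_norm_negPart_sq (T u)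

variable {T} {φ w : X} {lam α β : ℝ}

theorem inner_self_sub_mul_norm_sq_add_smul_of_eigen (hφ : ∀ ψ, ⟪φ, ψ⟫ = lam * ⟪T φ, T ψ⟫)
    (γ t : ℝ) :
    ⟪w + t • φ, w + t • φ⟫ - γ * ‖T (w + t • φ)‖ ^ 2 =
      ⟪w, w⟫ - γ * ‖T w‖ ^ 2 + (lam - γ) * (2 * t * ⟪T φ, T w⟫ + t ^ 2 * ‖T φ‖ ^ 2) := by
  rw [map_add, map_smul, norm_add_sq_real, norm_smul, real_inner_add_add_self,
    real_inner_smul_left, real_inner_smul_right, real_inner_smul_right, real_inner_comm φ w,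
    hφ w, hφ φ, real_inner_smul_right, real_inner_comm (T φ) (T w),
    real_inner_self_eq_norm_sq (T φ), Real.norm_eq_abs, mul_pow, sq_abs]
  ring

variable (hφ : ∀ ψ, ⟪φ, ψ⟫ = lam * ⟪T φ, T ψ⟫) (hαβ : α ≤ β)
  (hmax : ∀ t : ℝ, Jfun T α β (w + t • φ) ≤ Jfun T α β w)
include hφ hαβ hmax

theorem inner_nonneg_of_ae_nonpos_of_forall_Jfun_le (hlam : lam < β)
    (hw : ∀ᵐ x ∂μ, T w x ≤ 0) : 0 ≤ ⟪T φ, T w⟫ := by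
  suffices -(2 * ⟪T φ, T w⟫) ≤ 0 by linarith
  refine nonpos_of_forall_pos_mul_le_sq_mul (b := ‖T φ‖ ^ 2) fun ε hε => ?_
  have hJ := two_mul_Jfun_eq_add_posPart T α β (w + ε • φ)
  have hJw := two_mul_Jfun_eq_add_posPart T α β w
  rw [Lp.posPart_eq_zero_of_ae_nonpos hw, norm_zero] at hJw
  have hexp := inner_self_sub_mul_norm_sq_add_smul_of_eigen hφ β ε (w := w)
  have hpos : 0 ≤ (β - α) * ‖Lp.posPart (T (w + ε • φ))‖ ^ 2 :=
    mul_nonneg (sub_nonneg.2 hαβ) (sq_nonneg _)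
  have hdecr : 0 ≤ (β - lam) * (2 * ε * ⟪T φ, T w⟫ + ε ^ 2 * ‖T φ‖ ^ 2) := by
    linarith [hmax ε]
  linarith [(mul_nonneg_iff_of_pos_left (sub_pos.2 hlam)).1 hdecr]

theorem inner_nonpos_of_ae_nonneg_of_forall_Jfun_le (hlam : lam < α)
    (hw : ∀ᵐ x ∂μ, 0 ≤ T w x) : ⟪T φ, T w⟫ ≤ 0 := by
  suffices (α - lam) * (2 * ⟪T φ, T w⟫) ≤ 0 by
    linarith [nonpos_of_mul_nonpos_right this (sub_pos.2 hlam)]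
  refine nonpos_of_forall_pos_mul_le_sq_mul (b := (β - lam) * ‖T φ‖ ^ 2) fun ε hε => ?_
  have hJ := two_mul_Jfun_eq_sub_negPart T α β (w + (-ε) • φ)
  have hJw := two_mul_Jfun_eq_sub_negPart T α β w
  rw [Lp.negPart_eq_zero_of_ae_nonneg hw, norm_zero] at hJw
  have hexp := inner_self_sub_mul_norm_sq_add_smul_of_eigen hφ α (-ε) (w := w)
  have hneg : ‖Lp.negPart (T (w + (-ε) • φ))‖ ≤ ‖ε • T φ‖ :=
    Lp.norm_negPart_le_of_ae_neg_le <| by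
      filter_upwards [Lp.coeFn_add (T w) ((-ε) • T φ), Lp.coeFn_smul (-ε) (T φ),
        Lp.coeFn_smul ε (T φ), hw] with x hadd hsmul hsmul' hx
      rw [map_add, map_smul, hadd, Pi.add_apply, hsmul, hsmul']
      simp only [Pi.smul_apply, smul_eq_mul]
      linarith
  have hneg_sq : ‖Lp.negPart (T (w + (-ε) • φ))‖ ^ 2 ≤ ε ^ 2 * ‖T φ‖ ^ 2 := by
    rw [norm_smul, Real.norm_of_nonneg hε.le] at hneg
    rw [← mul_pow]
    exact pow_le_pow_left₀ (norm_nonneg _) hneg 2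
  linarith [hmax (-ε), mul_le_mul_of_nonneg_left hneg_sq (sub_nonneg.2 hαβ)]

theorem measure_pos_of_forall_Jfun_add_smul_le (hφpos : ∀ᵐ x ∂μ, 0 < T φ x) (hlam : lam < α)
    (hw0 : T w ≠ 0) : 0 < μ {x | 0 < T w x} ∧ 0 < μ {x | T w x < 0} := by
  constructor
  · refine pos_iff_ne_zero.2 fun h => ?_
    have hw : ∀ᵐ x ∂μ, T w x ≤ 0 := by simpa using measure_eq_zero_iff_ae_notMem.1 h
    have hneg : ∀ᵐ x ∂μ, 0 ≤ (-T w) x := by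
      filter_upwards [Lp.coeFn_neg (T w), hw] with x hx hwx
      rw [hx, Pi.neg_apply, neg_nonneg]
      exact hwx
    have hinner := Lp.inner_pos_of_ae_pos_of_ae_nonneg hφpos hneg (neg_ne_zero.2 hw0)
    rw [inner_neg_right] at hinner
    linarith [inner_nonneg_of_ae_nonpos_of_forall_Jfun_le hφ hαβ hmax (hlam.trans_le hαβ) hw]
  · refine pos_iff_ne_zero.2 fun h => ?_
    have hw : ∀ᵐ x ∂μ, 0 ≤ T w x := by simpa using measure_eq_zero_iff_ae_notMem.1 h
    linarith [Lp.inner_pos_of_ae_pos_of_ae_nonneg hφpos hw hw0,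
      inner_nonpos_of_ae_nonneg_of_forall_Jfun_le hφ hαβ hmax hlam hw]

end Perturbation

theorem stmt_4_general
    {n : ℕ} {Ωs : Set (EuclideanSpace ℝ (Fin n))}
    {X₀ : Type*} [NormedAddCommGroup X₀] [InnerProductSpace ℝ X₀]
    (T : X₀ →ₗ[ℝ] Lp ℝ 2 (volume.restrict Ωs)) (hT : Function.Injective T)
    {lk : ℝ} (V₁ V₂ : Submodule ℝ X₀) (hcompl : IsCompl V₁ V₂)
    (lam1 : ℝ) (hlam1k : lam1 ≤ lk) (φ₁ : V₁)
    (hφ₁pos : ∀ᵐ x ∂(volume.restrict Ωs), 0 < (T (φ₁ : X₀)) x)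
    (hφ₁eig : ∀ ψ : X₀, ⟪(φ₁ : X₀), ψ⟫ = lam1 * ⟪T (φ₁ : X₀), T ψ⟫)
    {α β : ℝ} (hA : lk < α) (hAB : α ≤ β)
    (M : V₂ → V₁)
    (hM : ∀ (v : V₂) (u : V₁),
      Jfun T α β ((u : X₀) + (v : X₀)) ≤ Jfun T α β ((M v : X₀) + (v : X₀)))
    :
    ∀ v : V₂, v ≠ 0 →
      0 < (volume.restrict Ωs) {x | 0 < (T ((M v : X₀) + (v : X₀))) x} ∧
      0 < (volume.restrict Ωs) {x | (T ((M v : X₀) + (v : X₀))) x < 0} := by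
  intro v hv
  have hw0 : (M v : X₀) + v ≠ 0 := fun h => hv <| Subtype.ext <|
    Submodule.disjoint_def.1 hcompl.disjoint v
      (by rw [eq_neg_of_add_eq_zero_right h]; exact neg_mem (M v).2) v.2
  refine measure_pos_of_forall_Jfun_add_smul_le hφ₁eig hAB (fun t => ?_) hφ₁pos
    (hlam1k.trans_lt hA) ((map_ne_zero_iff T hT).2 hw0)
  simpa only [Submodule.coe_add, Submodule.coe_smul, add_right_comm] using hM v (M v + t • φ₁)

theorem stmt_4
    {n : ℕ} {s : ℝ} (hs0 : 0 < s) (hs1 : s < 1) (hns : 2 * s < (n : ℝ))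
    {Ωs : Set (EuclideanSpace ℝ (Fin n))} (hΩb : Bornology.IsBounded Ωs)
    (hΩm : MeasurableSet Ωs)
    {K : EuclideanSpace ℝ (Fin n) → ℝ} (hKpos : ∀ x, x ≠ 0 → 0 < K x)
    (hK1 : Integrable (fun x => min (‖x‖ ^ 2) 1 * K x))
    (hK2 : ∃ lam > 0, ∀ x, x ≠ 0 → lam * ‖x‖ ^ (-((n : ℝ) + 2 * s)) ≤ K x)
    (hK3 : ∀ x, K (-x) = K x)
    {X₀ : Type*} [NormedAddCommGroup X₀] [InnerProductSpace ℝ X₀] [CompleteSpace X₀]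
    (T : X₀ →ₗ[ℝ] Lp ℝ 2 (volume.restrict Ωs)) (hT : Function.Injective T)
    {lk lk1 : ℝ} (hlk0 : 0 < lk) (hlk : lk < lk1)
    (V₁ V₂ : Submodule ℝ X₀) [FiniteDimensional ℝ V₁]
    (hV₂ : ∀ v : X₀, v ∈ V₂ ↔ ∀ u ∈ V₁, ⟪u, v⟫ = 0 ∧ ⟪T u, T v⟫ = 0)
    (hcompl : IsCompl V₁ V₂)
    (hV₁b : ∀ u ∈ V₁, ⟪u, u⟫ ≤ lk * ‖T u‖ ^ 2)
    (hV₂b : ∀ v ∈ V₂, lk1 * ‖T v‖ ^ 2 ≤ ⟪v, v⟫)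
    (lam1 : ℝ) (hlam1 : 0 < lam1) (hlam1k : lam1 ≤ lk) (φ₁ : V₁)
    (hφ₁pos : ∀ᵐ x ∂(volume.restrict Ωs), 0 < (T (φ₁ : X₀)) x)
    (hφ₁eig : ∀ ψ : X₀, ⟪(φ₁ : X₀), ψ⟫ = lam1 * ⟪T (φ₁ : X₀), T ψ⟫)
    {α β : ℝ} (hA : lk < α) (hAB : α ≤ β)
    (M : V₂ → V₁)
    (hM : ∀ (v : V₂) (u : V₁),
      Jfun T α β ((u : X₀) + (v : X₀)) ≤ Jfun T α β ((M v : X₀) + (v : X₀)))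
    :
    ∀ v : V₂, v ≠ 0 →
      0 < (volume.restrict Ωs) {x | 0 < (T ((M v : X₀) + (v : X₀))) x} ∧
      0 < (volume.restrict Ωs) {x | (T ((M v : X₀) + (v : X₀))) x < 0} :=
  stmt_4_general T hT V₁ V₂ hcompl lam1 hlam1k φ₁ hφ₁pos hφ₁eig hA hAB M hM
end

section
/- Assume λ_k < α ≤ β. Then the functional J̃_{α,β} : V₂ → ℝ is continuously Fréchet differentiable, and for all v, w ∈ V₂ its derivative satisfies ⟨J̃_{α,β}'(v), w⟩ = ⟨J_{α,β}'(M_{α,β}(v)+v), w⟩ = B(M_{α,β}(v)+v, w) − α∫_Ω (M_{α,β}(v)+v)⁺ w + β∫_Ω (M_{α,β}(v)+v)⁻ w. -/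
open MeasureTheory RealInnerProductSpace Filter Topology

/-- The pairing `⟨J'_{α,β}(u), v⟩ = B(u,v) - α∫_Ω u⁺v + β∫_Ω u⁻v` of the Fréchet
derivative of `J_{α,β}`. -/
noncomputable def DJfun {Ω : Type*} [MeasurableSpace Ω] {μ : Measure Ω}
    {X₀ : Type*} [NormedAddCommGroup X₀] [InnerProductSpace ℝ X₀]
    (T : X₀ →ₗ[ℝ] Lp ℝ 2 μ) (α β : ℝ) (u v : X₀) : ℝ :=
  ⟪u, v⟫ - α * ⟪Lp.posPart (T u), T v⟫ + β * ⟪Lp.negPart (T u), T v⟫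

/-!
The functional `J` is `C^{1,1}`: the positive part is `1`-Lipschitz on `L²` and `½‖f⁺‖²` is
convex, so `J` differs from its first-order expansion by `O(‖h‖²)` and `DJ` is Lipschitz.
Since `α > λ_k`, `J` is uniformly strongly concave along `V₁`; together with the first-order
condition `DJ(M v + v) = 0` on `V₁` this makes `M` Lipschitz. Finally
`J̃(v + w) - J̃(v) - DJ(M v + v) w` is squeezed into `O(‖w‖²)`: from below by comparing the
maximum at `v + w` with the value at `M v`, from above by comparing the maximum at `v` with the
value at `M (v + w)`.
-/

open scoped NNReal

namespace MeasureTheory.Lp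

variable {A : Type*} [MeasurableSpace A] {μ : Measure A} {p : ENNReal}

theorem posPart_sub_negPart (f : Lp ℝ p μ) : posPart f - negPart f = f := by
  ext1
  filter_upwards [coeFn_posPart f, coeFn_negPart f, coeFn_sub (posPart f) (negPart f)]
    with a hpos hneg hsub
  rw [hsub, Pi.sub_apply, hpos, hneg, sub_neg_eq_add, max_add_min, add_zero]

theorem norm_posPart_sub_posPart_le (f g : Lp ℝ p μ) : ‖posPart f - posPart g‖ ≤ ‖f - g‖ :=
  (lipschitzWith_pos_part.norm_compLp_sub_le (max_eq_right le_rfl) f g).trans (by simp)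

theorem norm_negPart_sub_negPart_le [Fact (1 ≤ p)] (f g : Lp ℝ p μ) :
    ‖negPart f - negPart g‖ ≤ ‖f - g‖ := by
  calc ‖negPart f - negPart g‖ = ‖posPart (-f) - posPart (-g)‖ := rfl
    _ ≤ ‖-f - -g‖ := norm_posPart_sub_posPart_le _ _
    _ = ‖f - g‖ := by rw [neg_sub_neg, norm_sub_rev]

theorem norm_posPart_add_le (f h : Lp ℝ p μ) : ‖posPart (f + h)‖ ≤ ‖posPart f + h‖ := by
  refine norm_le_norm_of_ae_le ?_
  filter_upwards [coeFn_posPart (f + h), coeFn_posPart f, coeFn_add f h,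
    coeFn_add (posPart f) h] with a h₁ h₂ h₃ h₄
  simp only [h₁, h₂, h₃, h₄, Pi.add_apply, Real.norm_eq_abs]
  rcases le_total (f a) 0 with hf | hf
  · rw [max_eq_right hf, zero_add, abs_of_nonneg (le_max_right _ 0)]
    exact max_le (by linarith [le_abs_self (h a)]) (abs_nonneg _)
  · rw [max_eq_left hf, abs_of_nonneg (le_max_right _ 0)]
    exact max_le (le_abs_self _) (abs_nonneg _)

theorem inner_posPart_sub_posPart_le (f g : Lp ℝ 2 μ) :
    ⟪posPart f - posPart g, f - g⟫ ≤ ‖f - g‖ ^ 2 :=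
  calc ⟪posPart f - posPart g, f - g⟫ ≤ ‖posPart f - posPart g‖ * ‖f - g‖ :=
        real_inner_le_norm _ _
    _ ≤ ‖f - g‖ * ‖f - g‖ := by gcongr; exact norm_posPart_sub_posPart_le f g
    _ = ‖f - g‖ ^ 2 := (sq _).symm

theorem mul_sq_norm_sub_le_inner_posPart_negPart (f g : Lp ℝ 2 μ) {α β : ℝ} (hαβ : α ≤ β) :
    α * ‖f - g‖ ^ 2
      ≤ α * ⟪posPart f - posPart g, f - g⟫ - β * ⟪negPart f - negPart g, f - g⟫ := by
  have hneg : negPart f - negPart g = (posPart f - posPart g) - (f - g) :=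
    calc negPart f - negPart g
        = (posPart f - posPart g) - ((posPart f - negPart f) - (posPart g - negPart g)) := by
          abel
      _ = _ := by rw [posPart_sub_negPart, posPart_sub_negPart]
  rw [hneg, inner_sub_left (posPart f - posPart g), real_inner_self_eq_norm_sq]
  linarith [mul_le_mul_of_nonneg_left (inner_posPart_sub_posPart_le f g) (sub_nonneg.2 hαβ)]

theorem inner_posPart_posPart_add_sub_sub_nonneg (f h : Lp ℝ 2 μ) :
    0 ≤ ⟪posPart f, posPart (f + h) - posPart f - h⟫ := by
  rw [L2.inner_def]
  refine integral_nonneg_of_ae ?_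
  filter_upwards [coeFn_posPart (f + h), coeFn_posPart f, coeFn_add f h,
    coeFn_sub (posPart (f + h) - posPart f) h, coeFn_sub (posPart (f + h)) (posPart f)]
    with a h₁ h₂ h₃ h₄ h₅
  simp only [Pi.zero_apply, h₄, h₅, Pi.sub_apply, h₁, h₂, h₃, Pi.add_apply, RCLike.inner_apply,
    conj_trivial]
  rcases le_total (f a) 0 with hf | hf
  · simp [max_eq_right hf]
  · rw [max_eq_left hf]
    nlinarith [le_max_left (f a + h a) 0]

theorem abs_sq_norm_posPart_add_sub_le (f h : Lp ℝ 2 μ) :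
    |‖posPart (f + h)‖ ^ 2 - ‖posPart f‖ ^ 2 - 2 * ⟪posPart f, h⟫| ≤ ‖h‖ ^ 2 := by
  have hupper : ‖posPart (f + h)‖ ^ 2 ≤ ‖posPart f + h‖ ^ 2 := by
    gcongr; exact norm_posPart_add_le f h
  have hlower := inner_posPart_posPart_add_sub_sub_nonneg f h
  have hsplit := norm_add_sq_real (posPart f) (posPart (f + h) - posPart f)
  rw [add_sub_cancel, inner_sub_right, real_inner_self_eq_norm_sq] at hsplit
  rw [inner_sub_right, inner_sub_right, real_inner_self_eq_norm_sq] at hlower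
  rw [norm_add_sq_real] at hupper
  rw [abs_le]
  constructor <;> linarith [sq_nonneg ‖posPart (f + h) - posPart f‖, sq_nonneg ‖h‖]

theorem abs_sq_norm_negPart_add_sub_le (f h : Lp ℝ 2 μ) :
    |‖negPart (f + h)‖ ^ 2 - ‖negPart f‖ ^ 2 + 2 * ⟪negPart f, h⟫| ≤ ‖h‖ ^ 2 := by
  have := abs_sq_norm_posPart_add_sub_le (-f) (-h)
  rw [← neg_add, inner_neg_right, norm_neg, mul_neg, sub_neg_eq_add] at this
  exact this

end MeasureTheory.Lp

section Envelope

variable {E : Type*} [NormedAddCommGroup E] [NormedSpace ℝ E]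

theorem hasFDerivAt_of_norm_sub_le_sq {F : Type*} [NormedAddCommGroup F] [NormedSpace ℝ F]
    {f : E → F} {f' : E →L[ℝ] F} {x : E} (K : ℝ)
    (h : ∀ w, ‖f (x + w) - f x - f' w‖ ≤ K * ‖w‖ ^ 2) : HasFDerivAt f f' x := by
  rw [hasFDerivAt_iff_isLittleO_nhds_zero]
  refine (Asymptotics.IsBigO.of_bound K (Eventually.of_forall fun w => ?_)).trans_isLittleO
    (Asymptotics.isLittleO_norm_pow_id one_lt_two)
  simpa using h w

theorem HasFDerivAt.apply_eq_zero_of_forall_add_le {f : E → ℝ} {f' : E →L[ℝ] ℝ} {x : E}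
    {S : Submodule ℝ E} (hf : HasFDerivAt f f' x) (hmax : ∀ u ∈ S, f (x + u) ≤ f x)
    {u : E} (hu : u ∈ S) : f' u = 0 := by
  have hline : HasDerivAt (fun t : ℝ => f (x + t • u)) (f' u) 0 := by
    have hl : HasDerivAt (fun t : ℝ => x + t • u) u 0 := by
      simpa using ((hasDerivAt_id' (0 : ℝ)).smul_const u).const_add x
    exact hf.comp_hasDerivAt_of_eq 0 hl (by simp)
  refine IsLocalMax.hasDerivAt_eq_zero (Eventually.of_forall fun t => ?_) hline
  simpa using hmax _ (S.smul_mem t hu)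

variable {φ : E → ℝ} {φ' : E → E →L[ℝ] ℝ} {V₁ V₂ : Submodule ℝ E} {M : V₂ → V₁}

theorem apply_eq_zero_at_maximizer (hφ : ∀ x, HasFDerivAt φ (φ' x) x)
    (hM : ∀ (v : V₂) (u : V₁), φ (u + v) ≤ φ (M v + v)) (v : V₂) {u : E} (hu : u ∈ V₁) :
    φ' (M v + v) u = 0 := by
  refine (hφ _).apply_eq_zero_of_forall_add_le (fun u' hu' => ?_) hu
  simpa [add_right_comm] using hM v (M v + ⟨u', hu'⟩)

theorem lipschitzWith_of_critical_of_strongly_concave {δ : ℝ} (hδ : 0 < δ) {C : ℝ≥0}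
    (hφ' : LipschitzWith C φ') (hconc : ∀ x, ∀ e ∈ V₁, δ * ‖e‖ ^ 2 ≤ φ' x e - φ' (x + e) e)
    (hcrit : ∀ (v : V₂), ∀ u ∈ V₁, φ' (M v + v) u = 0) :
    LipschitzWith (Real.toNNReal (C / δ)) (fun v : V₂ => (M v : E)) := by
  refine LipschitzWith.of_dist_le' fun v v' => ?_
  set e : E := M v - M v'
  have he : e ∈ V₁ := sub_mem (M v).2 (M v').2
  have hdist : dist v v' = ‖(v : E) - v'‖ := by rw [dist_eq_norm]; rfl
  have key : δ * ‖e‖ ^ 2 ≤ C * ‖(v : E) - v'‖ * ‖e‖ :=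
    calc δ * ‖e‖ ^ 2 ≤ φ' (M v' + v) e - φ' (M v' + v + e) e := hconc _ e he
      _ = (φ' (M v' + v) - φ' (M v' + v')) e := by
        rw [show (M v' + v + e : E) = M v + v by simp only [e]; abel, hcrit v e he,
          _root_.sub_apply, hcrit v' e he]
      _ ≤ ‖φ' (M v' + v) - φ' (M v' + v')‖ * ‖e‖ :=
        (Real.le_norm_self _).trans (ContinuousLinearMap.le_opNorm _ _)
      _ ≤ C * ‖(v : E) - v'‖ * ‖e‖ := by
        gcongr
        simpa using hφ'.norm_sub_le (M v' + v : E) (M v' + v')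
  rw [dist_eq_norm, hdist, div_mul_eq_mul_div, le_div_iff₀ hδ]
  rcases (norm_nonneg e).eq_or_lt with he0 | he0
  · rw [← he0, zero_mul]; positivity
  · nlinarith

theorem hasFDerivAt_comp_maximizer {K : ℝ} {C L : ℝ≥0}
    (hφ : ∀ x h, |φ (x + h) - φ x - φ' x h| ≤ K * ‖h‖ ^ 2) (hφ' : LipschitzWith C φ')
    (hM : ∀ (v : V₂) (u : V₁), φ (u + v) ≤ φ (M v + v))
    (hMlip : LipschitzWith L (fun v : V₂ => (M v : E))) (v : V₂) :
    HasFDerivAt (fun v : V₂ => φ (M v + v)) ((φ' (M v + v)).comp V₂.subtypeL) v := by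
  refine hasFDerivAt_of_norm_sub_le_sq (K + C * L) fun w => ?_
  set x : E := M v + v
  set y : E := M (v + w) + v
  have hw : ‖(w : E)‖ = ‖w‖ := rfl
  rw [← hw]
  have hlower : φ x + φ' x w - K * ‖(w : E)‖ ^ 2 ≤ φ (M (v + w) + (v + w : V₂)) :=
    calc _ ≤ φ (x + w) := by linarith [(abs_le.1 (hφ x w)).1]
      _ ≤ _ := by simpa [x, add_assoc] using hM (v + w) (M v)
  have hslope : φ' y w - φ' x w ≤ C * L * ‖(w : E)‖ ^ 2 :=
    calc φ' y w - φ' x w ≤ ‖φ' y - φ' x‖ * ‖(w : E)‖ :=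
          (Real.le_norm_self _).trans ((φ' y - φ' x).le_opNorm w)
      _ ≤ C * ‖y - x‖ * ‖(w : E)‖ := by gcongr; exact hφ'.norm_sub_le y x
      _ ≤ C * (L * ‖(w : E)‖) * ‖(w : E)‖ := by
        gcongr
        simpa [x, y] using hMlip.norm_sub_le (v + w) v
      _ = C * L * ‖(w : E)‖ ^ 2 := by ring
  have hupper :
      φ (M (v + w) + (v + w : V₂)) ≤ φ x + φ' x w + (K + C * L) * ‖(w : E)‖ ^ 2 :=
    calc φ (M (v + w) + (v + w : V₂)) = φ (y + w) := by simp [y, add_assoc]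
      _ ≤ φ y + φ' y w + K * ‖(w : E)‖ ^ 2 := by linarith [(abs_le.1 (hφ y w)).2]
      _ ≤ φ x + φ' x w + (K + C * L) * ‖(w : E)‖ ^ 2 := by linarith [hM v (M (v + w))]
  rw [Real.norm_eq_abs, abs_le]
  simp only [ContinuousLinearMap.comp_apply, Submodule.subtypeL_apply]
  have hCL : 0 ≤ (C : ℝ) * L * ‖(w : E)‖ ^ 2 := by positivity
  constructor <;> linarith

end Envelope

theorem exists_norm_le_mul_of_mul_sq_le {X F : Type*} [SeminormedAddCommGroup X]
    [SeminormedAddCommGroup F] (T : X → F) {lam : ℝ} (hlam : 0 < lam)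
    (h : ∀ u, lam * ‖T u‖ ^ 2 ≤ ‖u‖ ^ 2) : ∃ c : ℝ≥0, ∀ u, ‖T u‖ ≤ c * ‖u‖ := by
  refine ⟨⟨(√lam)⁻¹, by positivity⟩, fun u => ?_⟩
  change ‖T u‖ ≤ (√lam)⁻¹ * ‖u‖
  rw [inv_mul_eq_div, le_div_iff₀' (Real.sqrt_pos.2 hlam),
    ← pow_le_pow_iff_left₀ (by positivity) (norm_nonneg _) two_ne_zero, mul_pow,
    Real.sq_sqrt hlam.le]
  exact h u

section Jfun

variable {A : Type*} [MeasurableSpace A] {μ : Measure A}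
  {X : Type*} [NormedAddCommGroup X] [InnerProductSpace ℝ X]
  (T : X →ₗ[ℝ] Lp ℝ 2 μ) (α β : ℝ)
  {c : ℝ≥0} (hT : ∀ u, ‖T u‖ ≤ c * ‖u‖)

noncomputable def DJfunL (u : X) : X →L[ℝ] ℝ :=
  innerSL ℝ u - α • (innerSL ℝ (Lp.posPart (T u))).comp (T.mkContinuous c hT)
    + β • (innerSL ℝ (Lp.negPart (T u))).comp (T.mkContinuous c hT)

@[simp]
theorem DJfunL_apply (u w : X) : DJfunL T α β hT u w = DJfun T α β u w := by
  simp [DJfunL, DJfun]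

include hT in
theorem abs_Jfun_add_sub_sub_le (u h : X) :
    |Jfun T α β (u + h) - Jfun T α β u - DJfun T α β u h|
      ≤ (1 + (|α| + |β|) * c ^ 2) / 2 * ‖h‖ ^ 2 := by
  set EP :=
    ‖Lp.posPart (T u + T h)‖ ^ 2 - ‖Lp.posPart (T u)‖ ^ 2 - 2 * ⟪Lp.posPart (T u), T h⟫
  set EN :=
    ‖Lp.negPart (T u + T h)‖ ^ 2 - ‖Lp.negPart (T u)‖ ^ 2 + 2 * ⟪Lp.negPart (T u), T h⟫
  have hTh : ‖T h‖ ^ 2 ≤ c ^ 2 * ‖h‖ ^ 2 := by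
    rw [← mul_pow]; gcongr; exact hT h
  have hEP : |EP| ≤ c ^ 2 * ‖h‖ ^ 2 := (Lp.abs_sq_norm_posPart_add_sub_le _ _).trans hTh
  have hEN : |EN| ≤ c ^ 2 * ‖h‖ ^ 2 := (Lp.abs_sq_norm_negPart_add_sub_le _ _).trans hTh
  have hsplit : Jfun T α β (u + h) - Jfun T α β u - DJfun T α β u h
      = (‖h‖ ^ 2 - α * EP - β * EN) / 2 := by
    simp only [Jfun, DJfun, map_add, EP, EN]
    rw [real_inner_add_add_self, real_inner_self_eq_norm_sq h]
    ring
  rw [hsplit, abs_div, abs_two, div_mul_eq_mul_div]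
  gcongr
  calc |‖h‖ ^ 2 - α * EP - β * EN| ≤ |‖h‖ ^ 2| + |α| * |EP| + |β| * |EN| := by
        rw [← abs_mul, ← abs_mul]
        exact (abs_sub _ _).trans (add_le_add_left (abs_sub _ _) _)
    _ ≤ ‖h‖ ^ 2 + |α| * (c ^ 2 * ‖h‖ ^ 2) + |β| * (c ^ 2 * ‖h‖ ^ 2) := by
        rw [abs_of_nonneg (sq_nonneg _)]; gcongr
    _ = (1 + (|α| + |β|) * c ^ 2) * ‖h‖ ^ 2 := by ring

theorem hasFDerivAt_Jfun (u : X) : HasFDerivAt (Jfun T α β) (DJfunL T α β hT u) u :=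
  hasFDerivAt_of_norm_sub_le_sq _ fun h => by
    simpa [Real.norm_eq_abs] using abs_Jfun_add_sub_sub_le T α β hT u h

theorem lipschitzWith_DJfunL :
    LipschitzWith (1 + (‖α‖₊ + ‖β‖₊) * c ^ 2) (DJfunL T α β hT) := by
  refine LipschitzWith.of_dist_le_mul fun u₁ u₂ => ?_
  rw [dist_eq_norm, dist_eq_norm]
  set Tc := T.mkContinuous c hT
  have hTc : ‖Tc‖ ≤ c := LinearMap.mkContinuous_norm_le _ c.2 hT
  have hT₁₂ : ‖T u₁ - T u₂‖ ≤ c * ‖u₁ - u₂‖ := by rw [← map_sub]; exact hT _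
  have hpos := (Lp.norm_posPart_sub_posPart_le (T u₁) (T u₂)).trans hT₁₂
  have hneg := (Lp.norm_negPart_sub_negPart_le (T u₁) (T u₂)).trans hT₁₂
  calc ‖DJfunL T α β hT u₁ - DJfunL T α β hT u₂‖
      = ‖innerSL ℝ (u₁ - u₂)
          - α • (innerSL ℝ (Lp.posPart (T u₁) - Lp.posPart (T u₂))).comp Tc
          + β • (innerSL ℝ (Lp.negPart (T u₁) - Lp.negPart (T u₂))).comp Tc‖ := by
        simp only [DJfunL, map_sub, ContinuousLinearMap.sub_comp, smul_sub]
        congr 1; abel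
    _ ≤ ‖u₁ - u₂‖ + |α| * (‖Lp.posPart (T u₁) - Lp.posPart (T u₂)‖ * ‖Tc‖)
          + |β| * (‖Lp.negPart (T u₁) - Lp.negPart (T u₂)‖ * ‖Tc‖) := by
        refine (norm_add_le _ _).trans (add_le_add ((norm_sub_le _ _).trans
          (add_le_add (innerSL_apply_norm _ _).le ?_)) ?_) <;>
        · rw [norm_smul, Real.norm_eq_abs]
          gcongr
          exact (ContinuousLinearMap.opNorm_comp_le _ _).trans (by rw [innerSL_apply_norm])
    _ ≤ ‖u₁ - u₂‖ + |α| * (c * ‖u₁ - u₂‖ * c) + |β| * (c * ‖u₁ - u₂‖ * c) := by gcongr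
    _ = ((1 + (‖α‖₊ + ‖β‖₊) * c ^ 2 : ℝ≥0) : ℝ) * ‖u₁ - u₂‖ := by
        push_cast [coe_nnnorm, Real.norm_eq_abs]; ring

theorem DJfun_add_sub_DJfun_le {α β : ℝ} (hαβ : α ≤ β) (x e : X) :
    DJfun T α β (x + e) e - DJfun T α β x e ≤ ‖e‖ ^ 2 - α * ‖T e‖ ^ 2 := by
  have hsplit : DJfun T α β (x + e) e - DJfun T α β x e
      = ‖e‖ ^ 2 - α * ⟪Lp.posPart (T (x + e)) - Lp.posPart (T x), T e⟫
        + β * ⟪Lp.negPart (T (x + e)) - Lp.negPart (T x), T e⟫ := by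
    simp only [DJfun, inner_sub_left, inner_add_left, real_inner_self_eq_norm_sq]
    ring
  have hTe : T e = T (x + e) - T x := by simp
  rw [hsplit, hTe]
  linarith [Lp.mul_sq_norm_sub_le_inner_posPart_negPart (T (x + e)) (T x) hαβ]

end Jfun

theorem stmt_7_general
    {n : ℕ}
    {Ωs : Set (EuclideanSpace ℝ (Fin n))}
    {X₀ : Type*} [NormedAddCommGroup X₀] [InnerProductSpace ℝ X₀]
    (T : X₀ →ₗ[ℝ] Lp ℝ 2 (volume.restrict Ωs))
    {lk : ℝ} (hlk0 : 0 < lk)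
    (V₁ V₂ : Submodule ℝ X₀)
    (hV₁b : ∀ u ∈ V₁, ⟪u, u⟫ ≤ lk * ‖T u‖ ^ 2)
    (lam1 : ℝ) (hlam1 : 0 < lam1)
    (hPoin : ∀ u : X₀, lam1 * ‖T u‖ ^ 2 ≤ ⟪u, u⟫)
    {α β : ℝ} (hA : lk < α) (hAB : α ≤ β)
    (M : V₂ → V₁)
    (hM : ∀ (v : V₂) (u : V₁),
      Jfun T α β ((u : X₀) + (v : X₀)) ≤ Jfun T α β ((M v : X₀) + (v : X₀)))
    :
    ∃ D : V₂ → (V₂ →L[ℝ] ℝ), Continuous D ∧ ∀ v : V₂,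
      HasFDerivAt (fun v : V₂ => Jfun T α β ((M v : X₀) + (v : X₀))) (D v) v ∧
      ∀ w : V₂, D v w = DJfun T α β ((M v : X₀) + (v : X₀)) (w : X₀) := by
  obtain ⟨c, hT⟩ := exists_norm_le_mul_of_mul_sq_le T hlam1 fun u => by
    simpa only [real_inner_self_eq_norm_sq] using hPoin u
  have hδ : 0 < α / lk - 1 := sub_pos.2 ((one_lt_div hlk0).2 hA)
  have hconc : ∀ x, ∀ e ∈ V₁,
      (α / lk - 1) * ‖e‖ ^ 2 ≤ DJfunL T α β hT x e - DJfunL T α β hT (x + e) e := by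
    intro x e he
    have hV₁e : ‖e‖ ^ 2 ≤ lk * ‖T e‖ ^ 2 := by
      simpa only [real_inner_self_eq_norm_sq] using hV₁b e he
    have hαe : α / lk * ‖e‖ ^ 2 ≤ α * ‖T e‖ ^ 2 := by
      rw [div_mul_eq_mul_div, div_le_iff₀ hlk0]
      nlinarith [mul_le_mul_of_nonneg_left hV₁e (hlk0.trans hA).le]
    simp only [DJfunL_apply]
    linarith [DJfun_add_sub_DJfun_le T hAB x e]
  have hφ' := lipschitzWith_DJfunL T α β hT
  have hMlip := lipschitzWith_of_critical_of_strongly_concave hδ hφ' hconc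
    (apply_eq_zero_at_maximizer (hasFDerivAt_Jfun T α β hT) hM)
  refine ⟨fun v => (DJfunL T α β hT (M v + v)).comp V₂.subtypeL, ?_,
    fun v => ⟨?_, fun w => ?_⟩⟩
  · exact (hφ'.continuous.comp (hMlip.continuous.add continuous_subtype_val)).clm_comp
      continuous_const
  · exact hasFDerivAt_comp_maximizer (abs_Jfun_add_sub_sub_le T α β hT) hφ' hM hMlip v
  · exact DJfunL_apply T α β hT _ _

theorem stmt_7
    {n : ℕ} {s : ℝ} (hs0 : 0 < s) (hs1 : s < 1) (hns : 2 * s < (n : ℝ))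
    {Ωs : Set (EuclideanSpace ℝ (Fin n))} (hΩb : Bornology.IsBounded Ωs)
    (hΩm : MeasurableSet Ωs)
    {K : EuclideanSpace ℝ (Fin n) → ℝ} (hKpos : ∀ x, x ≠ 0 → 0 < K x)
    (hK1 : Integrable (fun x => min (‖x‖ ^ 2) 1 * K x))
    (hK2 : ∃ lam > 0, ∀ x, x ≠ 0 → lam * ‖x‖ ^ (-((n : ℝ) + 2 * s)) ≤ K x)
    (hK3 : ∀ x, K (-x) = K x)
    {X₀ : Type*} [NormedAddCommGroup X₀] [InnerProductSpace ℝ X₀] [CompleteSpace X₀]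
    (T : X₀ →ₗ[ℝ] Lp ℝ 2 (volume.restrict Ωs)) (hT : Function.Injective T)
    {lk lk1 : ℝ} (hlk0 : 0 < lk) (hlk : lk < lk1)
    (V₁ V₂ : Submodule ℝ X₀) [FiniteDimensional ℝ V₁]
    (hV₂ : ∀ v : X₀, v ∈ V₂ ↔ ∀ u ∈ V₁, ⟪u, v⟫ = 0 ∧ ⟪T u, T v⟫ = 0)
    (hcompl : IsCompl V₁ V₂)
    (hV₁b : ∀ u ∈ V₁, ⟪u, u⟫ ≤ lk * ‖T u‖ ^ 2)
    (hV₂b : ∀ v ∈ V₂, lk1 * ‖T v‖ ^ 2 ≤ ⟪v, v⟫)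
    (lam1 : ℝ) (hlam1 : 0 < lam1)
    (hPoin : ∀ u : X₀, lam1 * ‖T u‖ ^ 2 ≤ ⟪u, u⟫)
    {α β : ℝ} (hA : lk < α) (hAB : α ≤ β)
    (M : V₂ → V₁)
    (hM : ∀ (v : V₂) (u : V₁),
      Jfun T α β ((u : X₀) + (v : X₀)) ≤ Jfun T α β ((M v : X₀) + (v : X₀)))
    :
    ∃ D : V₂ → (V₂ →L[ℝ] ℝ), Continuous D ∧ ∀ v : V₂,
      HasFDerivAt (fun v : V₂ => Jfun T α β ((M v : X₀) + (v : X₀))) (D v) v ∧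
      ∀ w : V₂, D v w = DJfun T α β ((M v : X₀) + (v : X₀)) (w : X₀) :=
  stmt_7_general T hlk0 V₁ V₂ hV₁b lam1 hlam1 hPoin hA hAB M hM
end
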